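/- Let k be a field, and fix power series P_i(t) = Σ_{j≥1} c_{i,j} t^j ∈ t·k[[t]] for 2 ≤ i ≤ n. Define v: k[[x_1,…,x_n]] → Z_{≥0} ∪ {∞} by v(ψ) = ord_t ψ(t, P_2(t),…,P_n(t)). For a positive integer q, set a_q = {f : v(f) ≥ q} and z_i = x_i − Σ_{j=1}^{q−1} c_{i,j} x_1^j for 2 ≤ i ≤ n. Then a_q is the ideal of k[[x_1,…,x_n]] generated by x_1^q, z_2, …, z_n. -/

import Mathlib

/-- Substitution of a power series `φ` with zero constant term into a power series `f`:
the image of `f` under the continuous `k`-algebra map `k[[s]] → k[[t]]`, `s ↦ φ`. -/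
noncomputable def substPS {k : Type*} [CommRing k] (φ f : PowerSeries k) : PowerSeries k :=
  PowerSeries.mk fun m =>
    ∑ n ∈ Finset.range (m + 1), PowerSeries.coeff n f * PowerSeries.coeff m (φ ^ n)

/-- Substitution of power series `g i` (each with zero constant term) for the variables of a
multivariate power series `ψ`: the image of `ψ` under the continuous `k`-algebra map
`k[[x_1,…,x_n]] → k[[t]]`, `x_i ↦ g i`. -/
noncomputable def mvSubst {k : Type*} [CommRing k] {n : ℕ} (g : Fin n → PowerSeries k)
    (ψ : MvPowerSeries (Fin n) k) : PowerSeries k :=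
  PowerSeries.mk fun m => PowerSeries.coeff m
    (MvPolynomial.aeval g (MvPowerSeries.trunc k (Finsupp.equivFunOnFinite.symm fun _ => m + 1) ψ))

/-- The single-variable power series `P`, viewed as a multivariate power series in the
first variable `x_1` (index `0`): this is `P(x_1)`. -/
noncomputable def embedX0 {k : Type*} [CommRing k] {n : ℕ} [NeZero n] (P : PowerSeries k) :
    MvPowerSeries (Fin n) k :=
  fun d => if d = Finsupp.single 0 (d 0) then PowerSeries.coeff (d 0) P else 0

/-!
Write `S : k[[x_1,…,x_n]] → k[[t]]` for the substitution `x_1 ↦ t`, `x_i ↦ P_i`, so that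
`a_q = S⁻¹(t^q)`, and let `I = (x_1^q, z_2, …, z_n)`. Since `S z_i = P_i - (P_i mod t^q)`,
`I ⊆ a_q`. Conversely, modulo `I` every `x_i` is congruent to a polynomial in `x_1` without
constant term, so every `x_i^q` lies in `I`; hence every `ψ` is congruent modulo `I` to a
polynomial in the `x_i` (drop the monomials divisible by some `x_i^q`), and then to a polynomial
`r(x_1)`. If `ψ ∈ a_q`, then `r(x_1) ∈ a_q` too, i.e. `t^q ∣ S(r(x_1)) = r(t)`, so
`x_1^q ∣ r(x_1)` and `ψ ∈ I`.
-/

open Polynomial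

theorem PowerSeries.X_pow_dvd_iff_le_order {R : Type*} [Semiring R] {q : ℕ} {f : PowerSeries R} :
    X ^ q ∣ f ↔ (q : ℕ∞) ≤ f.order := by
  rw [order_eq_emultiplicity_X, pow_dvd_iff_le_emultiplicity]

theorem PowerSeries.X_pow_dvd_sub_trunc {R : Type*} [CommRing R] (q : ℕ) (f : PowerSeries R) :
    X ^ q ∣ f - (trunc q f : PowerSeries R) :=
  X_pow_dvd_iff.2 fun j hj => by
    rw [map_sub, Polynomial.coeff_coe, coeff_trunc, if_pos hj, sub_self]

theorem Polynomial.aeval_powerSeries_X {R : Type*} [CommSemiring R] (r : R[X]) :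
    aeval (PowerSeries.X : PowerSeries R) r = r := by
  have hX : coeToPowerSeries.algHom R (X : R[X]) = PowerSeries.X := by
    simp [coeToPowerSeries.algHom_apply]
  rw [← hX, aeval_algHom_apply, aeval_X_left_apply, coeToPowerSeries.algHom_apply,
    Algebra.algebraMap_self, PowerSeries.map_id, id_eq]

namespace MvPowerSeries

variable {σ R : Type*}

theorem mem_span_X_pow_of_coeff_eq_zero [CommSemiring R] (q : ℕ) (s : Finset σ)
    {f : MvPowerSeries σ R} (hf : ∀ d : σ →₀ ℕ, (∀ i ∈ s, d i < q) → coeff d f = 0) :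
    f ∈ Ideal.span ((fun i => X i ^ q) '' s) := by
  classical
  induction s using Finset.induction_on generalizing f with
  | empty =>
    rw [show f = 0 from ext fun d => by simpa using hf d]
    exact zero_mem _
  | insert a s ha ih =>
    let g : MvPowerSeries σ R := fun d => if d a < q then 0 else coeff d f
    let h : MvPowerSeries σ R := fun d => if d a < q then coeff d f else 0
    have coeff_g (d) : coeff d g = if d a < q then 0 else coeff d f := rfl
    have coeff_h (d) : coeff d h = if d a < q then coeff d f else 0 := rfl
    have hfgh : f = g + h := ext fun d => by
      rw [map_add, coeff_g, coeff_h]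
      split_ifs <;> simp
    have hg : X a ^ q ∣ g := X_pow_dvd_iff.2 fun d hd => by rw [coeff_g, if_pos hd]
    have hh : h ∈ Ideal.span ((fun i => X i ^ q) '' s) := ih fun d hd => by
      rw [coeff_h]
      split_ifs with hda
      · exact hf d (Finset.forall_mem_insert _ _ _ |>.2 ⟨hda, hd⟩)
      · rfl
    rw [hfgh, Finset.coe_insert, Set.image_insert_eq, Ideal.span_insert]
    exact Submodule.add_mem_sup (Ideal.mem_span_singleton.2 hg) hh

theorem sub_trunc'_mem_span_X_pow [CommRing R] [Fintype σ] [DecidableEq σ] (q : ℕ)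
    (f : MvPowerSeries σ R) :
    f - trunc' R (Finsupp.equivFunOnFinite.symm fun _ => q) f ∈
      Ideal.span (Set.range fun i => X i ^ q) := by
  rw [← Set.image_univ, ← Finset.coe_univ]
  refine mem_span_X_pow_of_coeff_eq_zero q _ fun d hd => ?_
  have hdN : d ≤ Finsupp.equivFunOnFinite.symm fun _ => q :=
    fun i => (hd i (Finset.mem_univ i)).le
  rw [map_sub, MvPolynomial.coeff_coe, coeff_trunc', if_pos hdN, sub_self]

theorem exists_sub_aeval_mem [CommRing R] [Fintype σ] [DecidableEq σ]
    {I : Ideal (MvPowerSeries σ R)} {q : ℕ} (x : MvPowerSeries σ R) (hpow : ∀ i, X i ^ q ∈ I)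
    (hX : ∀ i, ∃ r : R[X], X i - Polynomial.aeval x r ∈ I) (f : MvPowerSeries σ R) :
    ∃ r : R[X], f - Polynomial.aeval x r ∈ I := by
  let π := Ideal.Quotient.mkₐ R I
  have hπ {a b : MvPowerSeries σ R} : a - b ∈ I ↔ π a = π b :=
    (Ideal.Quotient.mk_eq_mk_iff_sub_mem a b).symm
  set p := trunc' R (Finsupp.equivFunOnFinite.symm fun _ => q) f
  have hfp : f - p ∈ I :=
    Ideal.span_le.2 (Set.range_subset_iff.2 hpow) (sub_trunc'_mem_span_X_pow q f)
  have hpX : π p = MvPolynomial.aeval (fun i => π (X i)) p := by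
    simpa [Function.comp_def] using congrArg (· p) (MvPolynomial.aeval_unique
      (π.comp (MvPolynomial.coeToMvPowerSeries.algHom R)))
  have hrange : (MvPolynomial.aeval (R := R) fun i => π (X i)).range ≤
      (Polynomial.aeval (R := R) (π x)).range := by
    rw [MvPolynomial.aeval_range]
    refine Algebra.adjoin_le (Set.range_subset_iff.2 fun i => ?_)
    obtain ⟨r, hr⟩ := hX i
    exact ⟨r, (Polynomial.aeval_algHom_apply π x r).trans (hπ.1 hr).symm⟩
  obtain ⟨r, hr⟩ := hrange ⟨p, hpX.symm⟩
  refine ⟨r, hπ.2 ?_⟩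
  calc π f = π p := hπ.1 hfp
    _ = Polynomial.aeval (π x) r := hr.symm
    _ = π (Polynomial.aeval x r) := Polynomial.aeval_algHom_apply π x r

end MvPowerSeries

theorem mvSubst_eq_subst {k : Type*} [CommRing k] {n : ℕ} [NeZero n]
    {g : Fin n → PowerSeries k} (hg : ∀ i, PowerSeries.constantCoeff (g i) = 0)
    (ψ : MvPowerSeries (Fin n) k) : mvSubst g ψ = MvPowerSeries.subst g ψ := by
  have hsubst := MvPowerSeries.hasSubst_of_constantCoeff_zero hg
  ext m
  set N : Fin n →₀ ℕ := Finsupp.equivFunOnFinite.symm fun _ => m + 1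
  rw [mvSubst, PowerSeries.coeff_mk, ← MvPowerSeries.subst_coe, ← sub_eq_zero, ← map_sub,
    ← MvPowerSeries.subst_sub hsubst]
  -- the truncation only drops terms of total degree `> m`, and these do not reach `t^m`
  -- because every `g i` has order `≥ 1`
  have hψ : ((m + 1 : ℕ) : ℕ∞) ≤ (↑(MvPowerSeries.trunc k N ψ) - ψ).order := by
    refine MvPowerSeries.nat_le_order fun d hd => ?_
    have hdN : d < N := Finsupp.lt_def.2
      ⟨fun i => (Finsupp.le_degree i d).trans hd.le, 0, (Finsupp.le_degree 0 d).trans_lt hd⟩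
    rw [map_sub, MvPolynomial.coeff_coe, MvPowerSeries.coeff_trunc, if_pos hdN, sub_self]
  have hg1 : 1 ≤ ⨅ i, MvPowerSeries.order (g i) :=
    le_iInf fun i => MvPowerSeries.one_le_order_iff_constCoeff_eq_zero.2 (hg i)
  refine PowerSeries.coeff_of_lt_order _ ?_
  rw [PowerSeries.order_eq_order]
  calc (m : ℕ∞) < ((m + 1 : ℕ) : ℕ∞) := by exact_mod_cast m.lt_succ_self
    _ ≤ (⨅ i, MvPowerSeries.order (g i)) * (↑(MvPowerSeries.trunc k N ψ) - ψ).order :=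
      one_mul ((m + 1 : ℕ) : ℕ∞) ▸ mul_le_mul' hg1 hψ
    _ ≤ _ := MvPowerSeries.le_order_subst hsubst _

section ValuationIdeal

open MvPowerSeries (X)

variable {k : Type*} [CommRing k] {n : ℕ} [NeZero n] {P : Fin n → PowerSeries k} (q : ℕ)

variable (P) in
/-- `x_1^q` and the `z_i = x_i - (P_i mod t^q)(x_1)`; the variable `x_1` has index `0`. -/
def valuationIdealGenerators : Set (MvPowerSeries (Fin n) k) :=
  insert (X 0 ^ q) {f | ∃ i : Fin n, i ≠ 0 ∧ f = X i - aeval (X 0) (PowerSeries.trunc q (P i))}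

variable (P) in
theorem exists_X_sub_aeval_mem_span_valuationIdealGenerators (i : Fin n) :
    ∃ r : k[X], X i - aeval (X 0) r ∈ Ideal.span (valuationIdealGenerators P q) := by
  by_cases hi : i = 0
  · exact ⟨Polynomial.X, by simp [hi]⟩
  · exact ⟨PowerSeries.trunc q (P i), Ideal.subset_span (Or.inr ⟨i, hi, rfl⟩)⟩

theorem X_pow_mem_span_valuationIdealGenerators
    (hPc : ∀ i, PowerSeries.constantCoeff (P i) = 0) (i : Fin n) :
    X i ^ q ∈ Ideal.span (valuationIdealGenerators P q) := by
  have hX0 : X 0 ^ q ∈ Ideal.span (valuationIdealGenerators P q) :=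
    Ideal.subset_span (Set.mem_insert _ _)
  by_cases hi : i = 0
  · exact hi ▸ hX0
  -- `z_i ∣ x_i^q - Q^q` and `x_1 ∣ Q` for `Q = (P_i mod t^q)(x_1)`
  obtain ⟨s, hs⟩ : Polynomial.X ∣ PowerSeries.trunc q (P i) := by
    rw [Polynomial.X_dvd_iff, PowerSeries.coeff_trunc]
    split_ifs <;> simp [hPc i]
  have hz : X i - aeval (X 0) (PowerSeries.trunc q (P i)) ∈
      Ideal.span (valuationIdealGenerators P q) :=
    Ideal.subset_span (Or.inr ⟨i, hi, rfl⟩)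
  have hQ : aeval (X 0) (PowerSeries.trunc q (P i)) ^ q ∈
      Ideal.span (valuationIdealGenerators P q) := by
    rw [hs, map_mul, aeval_X, mul_pow]
    exact Ideal.mul_mem_right _ _ hX0
  simpa using Ideal.add_mem _ (Ideal.mem_of_dvd _ (sub_dvd_pow_sub_pow _ _ q) hz) hQ

variable {S : MvPowerSeries (Fin n) k →ₐ[k] PowerSeries k}

theorem aeval_X_zero_of_map_X_zero (hS0 : S (X 0) = PowerSeries.X) (r : k[X]) :
    S (aeval (X 0) r) = r := by
  rw [← aeval_algHom_apply, hS0, aeval_powerSeries_X]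

theorem span_valuationIdealGenerators_le_comap (hP0 : P 0 = PowerSeries.X)
    (hS : ∀ i, S (X i) = P i) :
    Ideal.span (valuationIdealGenerators P q) ≤ (Ideal.span {PowerSeries.X ^ q}).comap S := by
  refine Ideal.span_le.2 ?_
  rintro _ (rfl | ⟨i, -, rfl⟩) <;> rw [SetLike.mem_coe, Ideal.mem_comap, Ideal.mem_span_singleton]
  · rw [map_pow, hS, hP0]
  · rw [map_sub, hS, aeval_X_zero_of_map_X_zero (hP0 ▸ hS 0)]
    exact PowerSeries.X_pow_dvd_sub_trunc q (P i)

theorem comap_le_span_valuationIdealGenerators (hP0 : P 0 = PowerSeries.X)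
    (hPc : ∀ i, PowerSeries.constantCoeff (P i) = 0) (hS : ∀ i, S (X i) = P i) :
    (Ideal.span {PowerSeries.X ^ q}).comap S ≤ Ideal.span (valuationIdealGenerators P q) := by
  intro ψ hψ
  obtain ⟨r, hr⟩ := MvPowerSeries.exists_sub_aeval_mem (X 0)
    (X_pow_mem_span_valuationIdealGenerators q hPc)
    (exists_X_sub_aeval_mem_span_valuationIdealGenerators P q) ψ
  have hr_comap : aeval (X 0) r ∈ (Ideal.span {PowerSeries.X ^ q}).comap S := by
    simpa using Ideal.sub_mem _ hψ (span_valuationIdealGenerators_le_comap q hP0 hS hr)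
  rw [Ideal.mem_comap, aeval_X_zero_of_map_X_zero (hP0 ▸ hS 0), Ideal.mem_span_singleton]
    at hr_comap
  obtain ⟨s, rfl⟩ : Polynomial.X ^ q ∣ r := Polynomial.X_pow_dvd_iff.2 fun j hj => by
    simpa using PowerSeries.X_pow_dvd_iff.1 hr_comap j hj
  have hrI : aeval (X 0) (Polynomial.X ^ q * s) ∈ Ideal.span (valuationIdealGenerators P q) := by
    rw [map_mul, map_pow, aeval_X]
    exact Ideal.mul_mem_right _ _ (Ideal.subset_span (Set.mem_insert _ _))
  simpa using Ideal.add_mem _ hr hrI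

end ValuationIdeal

theorem valuation_ideal_generated_by_general
    (k : Type) [Field k] {n : ℕ} [NeZero n]
    (P : Fin n → PowerSeries k) (hP0 : P 0 = PowerSeries.X)
    (hPc : ∀ i, PowerSeries.constantCoeff (P i) = 0)
    (q : ℕ) :
    {ψ : MvPowerSeries (Fin n) k | (q : ℕ∞) ≤ (mvSubst P ψ).order} =
      ↑(Ideal.span (insert (MvPowerSeries.X 0 ^ q)
        {f : MvPowerSeries (Fin n) k | ∃ i : Fin n, i ≠ 0 ∧
          f = MvPowerSeries.X i -
            Polynomial.aeval (MvPowerSeries.X 0) (PowerSeries.trunc q (P i))})) := by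
  set S := MvPowerSeries.substAlgHom (R := k) (MvPowerSeries.hasSubst_of_constantCoeff_zero hPc)
  have hS (i : Fin n) : S (MvPowerSeries.X i) = P i := MvPowerSeries.substAlgHom_X _ i
  have hset : {ψ : MvPowerSeries (Fin n) k | (q : ℕ∞) ≤ (mvSubst P ψ).order} =
      (Ideal.span {PowerSeries.X ^ q}).comap S := by
    ext ψ
    rw [SetLike.mem_coe, Ideal.mem_comap, Ideal.mem_span_singleton,
      PowerSeries.X_pow_dvd_iff_le_order, MvPowerSeries.coe_substAlgHom, ← mvSubst_eq_subst hPc]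
    rfl
  rw [hset]
  exact congrArg _ (le_antisymm (comap_le_span_valuationIdealGenerators q hP0 hPc hS)
    (span_valuationIdealGenerators_le_comap q hP0 hS))

/-- With `v(ψ) = ord_t ψ(t, P_2(t),…,P_n(t))` for fixed
`P_i = ∑_{j≥1} c_{i,j} t^j ∈ t·k[[t]]`, the valuation ideal `a_q = {f : v(f) ≥ q}` is generated
by `x_1^q, z_2, …, z_n`, where `z_i = x_i − ∑_{j=1}^{q-1} c_{i,j} x_1^j`
(i.e. `x_1` substituted into the truncation of `P_i` below degree `q`). -/
theorem valuation_ideal_generated_by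
    (k : Type) [Field k] {n : ℕ} [NeZero n]
    (P : Fin n → PowerSeries k) (hP0 : P 0 = PowerSeries.X)
    (hPc : ∀ i, PowerSeries.constantCoeff (P i) = 0)
    (q : ℕ) (hq : 0 < q) :
    {ψ : MvPowerSeries (Fin n) k | (q : ℕ∞) ≤ (mvSubst P ψ).order} =
      ↑(Ideal.span (insert (MvPowerSeries.X 0 ^ q)
        {f : MvPowerSeries (Fin n) k | ∃ i : Fin n, i ≠ 0 ∧
          f = MvPowerSeries.X i -
            Polynomial.aeval (MvPowerSeries.X 0) (PowerSeries.trunc q (P i))})) :=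
  valuation_ideal_generated_by_general k P hP0 hPc q
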